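/- Let Ω have finite measure and let (u^m), u be measurable functions on Ω with values in [0,1] such that for every δ > 0 and every m, ln(1+δ) ∫_{{u^m − u ≥ δ u}} (u^m − u) dx ≤ a_m, ln(1+δ) ∫_{{u − u^m ≥ δ u}} (u − u^m) dx ≤ a_m, where a_m → 0 as m → ∞. Then u^m → u strongly in L¹(Ω) and, consequently, in L^r(Ω) for every r ∈ [1, ∞). -/

import Mathlib

open MeasureTheory Filter

/-- From the level-set estimates one deduces strong `L¹` convergence, and
consequently `L^r` convergence for every `1 ≤ r < ∞`. -/
theorem strong_L1_and_Lr_convergence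
    {Ω : Type*} [MeasurableSpace Ω] (μ : Measure Ω) [IsFiniteMeasure μ]
    (u : ℕ → Ω → ℝ) (ulim : Ω → ℝ)
    (humeas : ∀ m, Measurable (u m)) (hlmeas : Measurable ulim)
    (hubd : ∀ m x, u m x ∈ Set.Icc (0 : ℝ) 1)
    (hlbd : ∀ x, ulim x ∈ Set.Icc (0 : ℝ) 1)
    (a : ℕ → ℝ) (ha : Tendsto a atTop (nhds 0))
    (h1 : ∀ δ > (0 : ℝ), ∀ m,
      Real.log (1 + δ) *
        ∫ x in {x | δ * ulim x ≤ u m x - ulim x}, (u m x - ulim x) ∂μ ≤ a m)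
    (h2 : ∀ δ > (0 : ℝ), ∀ m,
      Real.log (1 + δ) *
        ∫ x in {x | δ * ulim x ≤ ulim x - u m x}, (ulim x - u m x) ∂μ ≤ a m) :
    Tendsto (fun m => ∫ x, |u m x - ulim x| ∂μ) atTop (nhds 0) ∧
    ∀ r : ℝ, 1 ≤ r →
      Tendsto (fun m => ∫ x, |u m x - ulim x| ^ r ∂μ) atTop (nhds 0) := by
  set M : ℝ := (μ Set.univ).toReal with hM
  have hM0 : 0 ≤ M := ENNReal.toReal_nonneg
  -- basic integrability
  have hfmeas : ∀ m, Measurable fun x => u m x - ulim x := fun m => (humeas m).sub hlmeas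
  have habs_le_one : ∀ m x, |u m x - ulim x| ≤ 1 := by
    intro m x
    have h1 := hubd m x
    have h2 := hlbd x
    rw [Set.mem_Icc] at h1 h2
    rw [abs_le]
    constructor <;> linarith [h1.1, h1.2, h2.1, h2.2]
  have hint : ∀ m, Integrable (fun x => |u m x - ulim x|) μ := by
    intro m
    refine (integrable_const (1 : ℝ)).mono' ((hfmeas m).abs).aestronglyMeasurable ?_
    exact Filter.Eventually.of_forall fun x => by
      simpa [abs_abs] using habs_le_one m x
  -- key bound
  have key : ∀ δ > (0 : ℝ), ∀ m,
      (∫ x, |u m x - ulim x| ∂μ) ≤ 2 * a m / Real.log (1 + δ) + δ * M := by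
    intro δ hδ m
    set f : Ω → ℝ := fun x => u m x - ulim x with hf
    set A : Set Ω := {x | δ * ulim x ≤ u m x - ulim x} with hA
    set B : Set Ω := {x | δ * ulim x ≤ ulim x - u m x} with hB
    have hAm : MeasurableSet A := measurableSet_le (measurable_const.mul hlmeas) (hfmeas m)
    have hBm : MeasurableSet B :=
      measurableSet_le (measurable_const.mul hlmeas) (hlmeas.sub (humeas m))
    have hL : 0 < Real.log (1 + δ) := Real.log_pos (by linarith)
    -- split the integral
    have hsplit1 : (∫ x, |f x| ∂μ)
        = (∫ x in A, |f x| ∂μ) + ∫ x in Aᶜ, |f x| ∂μ :=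
      (integral_add_compl hAm (hint m)).symm
    have hsplit2 : (∫ x in Aᶜ, |f x| ∂μ)
        = (∫ x in B ∩ Aᶜ, |f x| ∂μ) + ∫ x in Bᶜ ∩ Aᶜ, |f x| ∂μ := by
      have := (integral_add_compl hBm ((hint m).restrict (s := Aᶜ))).symm
      rw [this, Measure.restrict_restrict hBm, Measure.restrict_restrict hBm.compl]
    -- bound on A
    have hA_eq : (∫ x in A, |f x| ∂μ) = ∫ x in A, f x ∂μ := by
      refine setIntegral_congr_fun hAm fun x hx => ?_
      have hx' : δ * ulim x ≤ f x := hx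
      have : 0 ≤ f x := le_trans (mul_nonneg hδ.le (hlbd x).1) hx'
      exact abs_of_nonneg this
    have hA_le : (∫ x in A, |f x| ∂μ) ≤ a m / Real.log (1 + δ) := by
      rw [hA_eq, le_div_iff₀ hL, mul_comm]
      exact h1 δ hδ m
    -- bound on B ∩ Aᶜ
    have hB_eq : (∫ x in B, |f x| ∂μ) = ∫ x in B, (ulim x - u m x) ∂μ := by
      refine setIntegral_congr_fun hBm fun x hx => ?_
      have hx' : δ * ulim x ≤ ulim x - u m x := hx
      have h0 : 0 ≤ ulim x - u m x := le_trans (mul_nonneg hδ.le (hlbd x).1) hx'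
      have : |f x| = -(f x) := abs_of_nonpos (by simp only [hf]; linarith)
      rw [this]; simp only [hf]; ring
    have hBA_le : (∫ x in B ∩ Aᶜ, |f x| ∂μ) ≤ a m / Real.log (1 + δ) := by
      have hmono : (∫ x in B ∩ Aᶜ, |f x| ∂μ) ≤ ∫ x in B, |f x| ∂μ := by
        refine setIntegral_mono_set ((hint m).restrict) ?_ ?_
        · exact Filter.Eventually.of_forall fun x => abs_nonneg _
        · exact HasSubset.Subset.eventuallyLE Set.inter_subset_left
      refine hmono.trans ?_
      rw [hB_eq, le_div_iff₀ hL, mul_comm]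
      exact h2 δ hδ m
    -- bound on Bᶜ ∩ Aᶜ
    have hC_le : (∫ x in Bᶜ ∩ Aᶜ, |f x| ∂μ) ≤ δ * M := by
      have hCm : MeasurableSet (Bᶜ ∩ Aᶜ) := hBm.compl.inter hAm.compl
      have hbd : ∀ x ∈ Bᶜ ∩ Aᶜ, |f x| ≤ δ := by
        rintro x ⟨hxB, hxA⟩
        have hxA' : ¬ δ * ulim x ≤ u m x - ulim x := hxA
        have hxB' : ¬ δ * ulim x ≤ ulim x - u m x := hxB
        push_neg at hxA' hxB'
        have hul : ulim x ≤ 1 := (hlbd x).2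
        have hδul : δ * ulim x ≤ δ := by nlinarith
        rw [abs_le]
        constructor <;> simp only [hf] <;> nlinarith
      calc (∫ x in Bᶜ ∩ Aᶜ, |f x| ∂μ) ≤ ∫ _x in Bᶜ ∩ Aᶜ, δ ∂μ := by
            refine setIntegral_mono_on ((hint m).restrict) (integrable_const _) hCm hbd
        _ = (μ (Bᶜ ∩ Aᶜ)).toReal * δ := by rw [setIntegral_const, smul_eq_mul]; rfl
        _ ≤ M * δ := by
            refine mul_le_mul_of_nonneg_right ?_ hδ.le
            exact ENNReal.toReal_mono (measure_ne_top μ _) (measure_mono (Set.subset_univ _))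
        _ = δ * M := by ring
    calc (∫ x, |f x| ∂μ)
        = (∫ x in A, |f x| ∂μ) + ((∫ x in B ∩ Aᶜ, |f x| ∂μ) + ∫ x in Bᶜ ∩ Aᶜ, |f x| ∂μ) := by
          rw [hsplit1, hsplit2]
      _ ≤ a m / Real.log (1 + δ) + (a m / Real.log (1 + δ) + δ * M) := by
          exact add_le_add hA_le (add_le_add hBA_le hC_le)
      _ = 2 * a m / Real.log (1 + δ) + δ * M := by ring
  -- L¹ convergence
  have hL1 : Tendsto (fun m => ∫ x, |u m x - ulim x| ∂μ) atTop (nhds 0) := by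
    rw [Metric.tendsto_atTop]
    intro ε hε
    set δ : ℝ := ε / (2 * (M + 1)) with hδdef
    have hδ : 0 < δ := div_pos hε (by linarith)
    have hL : 0 < Real.log (1 + δ) := Real.log_pos (by linarith)
    have hδM : δ * M < ε / 2 := by
      rw [hδdef, div_mul_eq_mul_div, div_lt_iff₀ (by linarith : (0:ℝ) < 2 * (M + 1))]
      nlinarith
    have haev : ∀ᶠ m in atTop, |a m| < ε / 4 * Real.log (1 + δ) := by
      have := Metric.tendsto_atTop.1 ha
      obtain ⟨N, hN⟩ := this (ε / 4 * Real.log (1 + δ)) (by positivity)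
      exact Filter.eventually_atTop.2 ⟨N, fun m hm => by simpa [Real.dist_eq] using hN m hm⟩
    obtain ⟨N, hN⟩ := Filter.eventually_atTop.1 haev
    refine ⟨N, fun m hm => ?_⟩
    have h0 : 0 ≤ ∫ x, |u m x - ulim x| ∂μ := integral_nonneg fun x => abs_nonneg _
    rw [Real.dist_eq, sub_zero, abs_of_nonneg h0]
    have hkey := key δ hδ m
    have hadiv : 2 * a m / Real.log (1 + δ) < ε / 2 := by
      rw [div_lt_iff₀ hL]
      have := (abs_lt.1 (hN m hm)).2
      nlinarith
    linarith
  refine ⟨hL1, fun r hr => ?_⟩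
  have hrpos : 0 < r := lt_of_lt_of_le one_pos hr
  have hle : ∀ m x, |u m x - ulim x| ^ r ≤ |u m x - ulim x| := by
    intro m x
    rcases eq_or_lt_of_le (abs_nonneg (u m x - ulim x)) with h0 | h0
    · rw [← h0, Real.zero_rpow hrpos.ne']
    · calc |u m x - ulim x| ^ r ≤ |u m x - ulim x| ^ (1:ℝ) :=
            Real.rpow_le_rpow_of_exponent_ge h0 (habs_le_one m x) hr
        _ = |u m x - ulim x| := Real.rpow_one _
  have hintr : ∀ m, Integrable (fun x => |u m x - ulim x| ^ r) μ := by
    intro m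
    refine (integrable_const (1 : ℝ)).mono'
      ((Real.continuous_rpow_const hrpos.le).measurable.comp (hfmeas m).abs).aestronglyMeasurable ?_
    refine Filter.Eventually.of_forall fun x => ?_
    have h1 : |u m x - ulim x| ^ r ≤ 1 :=
      Real.rpow_le_one (abs_nonneg _) (habs_le_one m x) hrpos.le
    have h2 : (0:ℝ) ≤ |u m x - ulim x| ^ r := Real.rpow_nonneg (abs_nonneg _) _
    simpa [abs_of_nonneg h2] using h1
  refine squeeze_zero (fun m => integral_nonneg fun x => Real.rpow_nonneg (abs_nonneg _) _)
    (fun m => integral_mono (hintr m) (hint m) fun x => hle m x) hL1
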